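/- arXiv:1603.06306 — 3 statements merged into one kernel-verified Lean document; each statement's English description precedes it below -/
import Mathlib

section
/- Let L > 0, μ_F ≥ 0, μ_R ≥ 0, and 0 < η < 1/L. Let F : E → ℝ be differentiable with ∇F Lipschitz continuous with constant L and such that y ↦ F(y) − (μ_F/2)‖y‖² is convex, and let R : E → ℝ be such that y ↦ R(y) − (μ_R/2)‖y‖² is convex. Set G = F + R. For x ∈ E and v ∈ E, let x⁺ be the unique minimizer over y ∈ E of (1/2)‖y − (x − η·v)‖² + η·R(y), and set h = (1/η)·(x − x⁺) and Δ = v − ∇F(x). Then for every y ∈ E: G(y) ≥ G(x⁺) + ⟨h, y − x⟩ + (η/2)‖h‖² + (μ_F/2)‖y − x‖² + (μ_R/2)‖y − x⁺‖² + ⟨Δ, x⁺ − y⟩. -/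
/-!
Since `x - x⁺ = η • h`, the optimality of `x⁺` for the `(1 + η μ_R)`-strongly convex prox
objective says exactly that `h - v` is a `μ_R`-strong subgradient of `R` at `x⁺`. Add to this the
strong-convexity lower bound for `F` at `x` and the descent-lemma upper bound for `F` at `x⁺`;
the curvature term `L/2 ‖x⁺ - x‖² = L η²/2 ‖h‖²` is at most `η/2 ‖h‖²` because `η L < 1`.
-/

open RealInnerProductSpace

open Set AffineMap Filter Topology

section StrongConvexity

variable {E : Type*} [NormedAddCommGroup E] [InnerProductSpace ℝ E]
  {f g : E → ℝ} {s : Set E} {m n : ℝ} {x y : E}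

theorem StrongConvexOn.add (hf : StrongConvexOn s m f) (hg : StrongConvexOn s n g) :
    StrongConvexOn s (m + n) (f + g) := by
  refine (UniformConvexOn.add hf hg).mono fun r => le_of_eq ?_
  simp only [Pi.add_apply]
  ring

theorem StrongConvexOn.const_mul {c : ℝ} (hc : 0 ≤ c) (hf : StrongConvexOn s m f) :
    StrongConvexOn s (c * m) fun z => c * f z := by
  rw [strongConvexOn_iff_convex] at hf ⊢
  refine (hf.smul hc).congr fun z _ => ?_
  simp only [smul_eq_mul]
  ring

theorem strongConvexOn_half_sq_norm_sub (hs : Convex ℝ s) (u : E) :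
    StrongConvexOn s 1 fun z => 1 / 2 * ‖z - u‖ ^ 2 := by
  rw [strongConvexOn_iff_convex]
  have hlin : ConvexOn ℝ s fun z => 1 / 2 * ‖u‖ ^ 2 - ⟪z, u⟫ :=
    (convexOn_const _ hs).sub (((innerₛₗ ℝ).flip u).concaveOn hs)
  convert hlin using 2 with z
  rw [norm_sub_sq_real]
  ring

theorem StrongConvexOn.add_sq_le_of_isMinOn (hf : StrongConvexOn s m f) (hmin : IsMinOn f s x)
    (hx : x ∈ s) (hy : y ∈ s) : f x + m / 2 * ‖y - x‖ ^ 2 ≤ f y := by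
  have hweighted : ∀ b ∈ Ioo (0 : ℝ) 1, f x + (1 - b) * (m / 2 * ‖y - x‖ ^ 2) ≤ f y := by
    rintro b ⟨hb0, hb1⟩
    have hconv := hf.2 hx hy (sub_nonneg.mpr hb1.le) hb0.le (sub_add_cancel 1 b)
    have hle := isMinOn_iff.mp hmin _
      (hf.1 hx hy (sub_nonneg.mpr hb1.le) hb0.le (sub_add_cancel 1 b))
    rw [norm_sub_rev] at hconv
    simp only [smul_eq_mul] at hconv
    have hscaled : b * (f x + (1 - b) * (m / 2 * ‖y - x‖ ^ 2)) ≤ b * f y := by nlinarith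
    exact le_of_mul_le_mul_left hscaled hb0
  have hlim : Tendsto (fun b : ℝ => f x + (1 - b) * (m / 2 * ‖y - x‖ ^ 2))
      (𝓝[>] 0) (𝓝 (f x + m / 2 * ‖y - x‖ ^ 2)) :=
    tendsto_nhdsWithin_of_tendsto_nhds (Continuous.tendsto' (by fun_prop) 0 _ (by simp))
  exact le_of_tendsto hlim (mem_of_superset (Ioo_mem_nhdsGT one_pos) hweighted)

theorem StrongConvexOn.add_inner_add_sq_le_of_isMinOn_prox {R : E → ℝ} {μ η : ℝ} {u p : E}
    (hR : StrongConvexOn univ μ R) (hη : 0 < η)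
    (hp : IsMinOn (fun z => 1 / 2 * ‖z - u‖ ^ 2 + η * R z) univ p) (y : E) :
    R p + ⟪η⁻¹ • (u - p), y - p⟫ + μ / 2 * ‖y - p‖ ^ 2 ≤ R y := by
  have hΦ := (strongConvexOn_half_sq_norm_sub convex_univ u).add (hR.const_mul hη.le)
  have hmin := hΦ.add_sq_le_of_isMinOn hp (mem_univ p) (mem_univ y)
  have hsplit : ‖y - u‖ ^ 2 = ‖y - p‖ ^ 2 - 2 * ⟪u - p, y - p⟫ + ‖u - p‖ ^ 2 := by
    rw [show y - u = (y - p) - (u - p) by abel, norm_sub_sq_real, real_inner_comm]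
  simp only [Pi.add_apply, norm_sub_rev p u, hsplit] at hmin
  have key : η * (R p + ⟪η⁻¹ • (u - p), y - p⟫ + μ / 2 * ‖y - p‖ ^ 2) ≤ η * R y := by
    rw [real_inner_smul_left, mul_add, mul_add, ← mul_assoc, mul_inv_cancel₀ hη.ne']
    linarith
  exact le_of_mul_le_mul_left key hη

end StrongConvexity

section Gradient

variable {E : Type*} [NormedAddCommGroup E] [InnerProductSpace ℝ E] [CompleteSpace E]
  {f : E → ℝ} {s : Set E} {m : ℝ} {x y g : E}

theorem HasGradientAt.hasDerivAt_comp_lineMap {t : ℝ} (hf : HasGradientAt f g (lineMap x y t)) :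
    HasDerivAt (fun τ => f (lineMap x y τ)) ⟪g, y - x⟫ t :=
  hf.hasFDerivAt.comp_hasDerivAt t hasDerivAt_lineMap

theorem ConvexOn.add_inner_le_of_hasGradientAt (hf : ConvexOn ℝ s f) (hx : x ∈ s) (hy : y ∈ s)
    (hg : HasGradientAt f g x) : f x + ⟪g, y - x⟫ ≤ f y := by
  have hline : ConvexOn ℝ (lineMap x y ⁻¹' s) (f ∘ lineMap x y) := hf.comp_affineMap _
  have hderiv := HasGradientAt.hasDerivAt_comp_lineMap (t := 0) (y := y) (by simpa using hg)
  have hslope := hline.le_slope_of_hasDerivAt (by simpa) (by simpa) one_pos hderiv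
  simp only [slope_def_field, Function.comp_apply, lineMap_apply_one, lineMap_apply_zero,
    sub_zero, div_one] at hslope
  linarith

theorem StrongConvexOn.add_inner_add_sq_le_of_hasGradientAt (hf : StrongConvexOn s m f)
    (hx : x ∈ s) (hy : y ∈ s) (hg : HasGradientAt f g x) :
    f x + ⟪g, y - x⟫ + m / 2 * ‖y - x‖ ^ 2 ≤ f y := by
  have hquad : HasGradientAt (fun z => f z - m / 2 * ‖z‖ ^ 2) (g - m • x) x := by
    rw [hasGradientAt_iff_hasFDerivAt]
    refine (hg.hasFDerivAt.sub ((hasStrictFDerivAt_norm_sq x).hasFDerivAt.const_mul (m / 2))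
      ).congr_fderiv ?_
    ext z
    simp only [sub_apply, smul_apply, InnerProductSpace.toDual_apply_apply, coe_innerSL_apply,
      inner_sub_left, real_inner_smul_left, smul_eq_mul, nsmul_eq_mul]
    ring
  have hconvex := (strongConvexOn_iff_convex.mp hf).add_inner_le_of_hasGradientAt hx hy hquad
  rw [norm_sub_sq_real]
  simp only [inner_sub_left, inner_sub_right, real_inner_smul_left, real_inner_self_eq_norm_sq]
    at hconvex ⊢
  rw [real_inner_comm x y]
  linarith

theorem le_add_inner_add_sq_of_lipschitzWith_gradient {f' : E → E} {K : NNReal}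
    (hf : ∀ z, HasGradientAt f (f' z) z) (hf' : LipschitzWith K f') (x y : E) :
    f y ≤ f x + ⟪f' x, y - x⟫ + K / 2 * ‖y - x‖ ^ 2 := by
  set ψ : ℝ → ℝ := fun t => f (lineMap x y t) - t * ⟪f' x, y - x⟫ - K / 2 * ‖y - x‖ ^ 2 * t ^ 2
    with hψ
  have hderiv :
      ∀ t, HasDerivAt ψ (⟪f' (lineMap x y t) - f' x, y - x⟫ - K * ‖y - x‖ ^ 2 * t) t := by
    intro t
    refine ((((hf (lineMap x y t)).hasDerivAt_comp_lineMap).sub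
      ((hasDerivAt_id t).mul_const ⟪f' x, y - x⟫)).sub
      ((hasDerivAt_pow 2 t).const_mul (K / 2 * ‖y - x‖ ^ 2))).congr_deriv ?_
    simp only [inner_sub_left]
    ring
  have hslope : ∀ t, 0 ≤ t → ⟪f' (lineMap x y t) - f' x, y - x⟫ ≤ K * ‖y - x‖ ^ 2 * t := by
    intro t ht
    calc ⟪f' (lineMap x y t) - f' x, y - x⟫
        ≤ ‖f' (lineMap x y t) - f' x‖ * ‖y - x‖ := real_inner_le_norm _ _
      _ ≤ K * ‖lineMap x y t - x‖ * ‖y - x‖ := by gcongr; exact hf'.norm_sub_le _ _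
      _ = K * ‖y - x‖ ^ 2 * t := by
        rw [lineMap_apply_module', add_sub_cancel_right, norm_smul, Real.norm_of_nonneg ht]
        ring
  have hanti : AntitoneOn ψ (Icc 0 1) :=
    antitoneOn_of_hasDerivWithinAt_nonpos (convex_Icc 0 1)
      (fun t _ => (hderiv t).continuousAt.continuousWithinAt)
      (fun t _ => (hderiv t).hasDerivWithinAt)
      (fun t ht => by rw [interior_Icc] at ht; linarith [hslope t ht.1.le])
  have hends := hanti (left_mem_Icc.2 zero_le_one) (right_mem_Icc.2 zero_le_one) zero_le_one
  simp only [hψ, lineMap_apply_zero, lineMap_apply_one] at hends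
  linarith

end Gradient

theorem prox_three_point_inequality_general
    {E : Type*} [NormedAddCommGroup E] [InnerProductSpace ℝ E] [FiniteDimensional ℝ E]
    (L μF μR η : ℝ)
    (hη : 0 < η) (hηL : η < 1 / L)
    (F : E → ℝ) (F' : E → E) (hF : ∀ x, HasGradientAt F (F' x) x)
    (hLip : LipschitzWith (Real.toNNReal L) F')
    (hFconv : ConvexOn ℝ Set.univ (fun y => F y - μF / 2 * ‖y‖ ^ 2))
    (R : E → ℝ)
    (hRconv : ConvexOn ℝ Set.univ (fun y => R y - μR / 2 * ‖y‖ ^ 2))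
    (G : E → ℝ) (hG : G = fun y => F y + R y)
    (x v xp : E)
    (hxp : ∀ y : E, 1 / 2 * ‖xp - (x - η • v)‖ ^ 2 + η * R xp ≤
      1 / 2 * ‖y - (x - η • v)‖ ^ 2 + η * R y)
    (h Δ : E) (hh : h = (1 / η) • (x - xp)) (hΔ : Δ = v - F' x) :
    ∀ y : E,
      G y ≥ G xp + ⟪h, y - x⟫ + η / 2 * ‖h‖ ^ 2 + μF / 2 * ‖y - x‖ ^ 2 +
        μR / 2 * ‖y - xp‖ ^ 2 + ⟪Δ, xp - y⟫ := by
  intro y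
  have hL : 0 < L := one_div_pos.mp (hη.trans hηL)
  have hxp_eq : xp = x - η • h := by
    rw [hh, smul_smul, mul_one_div_cancel hη.ne', one_smul, sub_sub_cancel]
  have hR := (strongConvexOn_iff_convex.mpr hRconv).add_inner_add_sq_le_of_isMinOn_prox hη
    (isMinOn_univ_iff.mpr hxp) y
  have hF_lower := (strongConvexOn_iff_convex.mpr hFconv).add_inner_add_sq_le_of_hasGradientAt
    (mem_univ x) (mem_univ y) (hF x)
  have hF_upper := le_add_inner_add_sq_of_lipschitzWith_gradient hF hLip x xp
  rw [Real.coe_toNNReal L hL.le] at hF_upper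
  have hsubgrad : η⁻¹ • (x - η • v - xp) = h - v := by
    rw [hxp_eq, show x - η • v - (x - η • h) = η • (h - v) by module, smul_smul,
      inv_mul_cancel₀ hη.ne', one_smul]
  have hcurv : L / 2 * ‖xp - x‖ ^ 2 ≤ η / 2 * ‖h‖ ^ 2 := by
    have hLη : L * η ≤ 1 := by linarith [(lt_div_iff₀ hL).mp hηL]
    calc L / 2 * ‖xp - x‖ ^ 2 = L * η * (η / 2 * ‖h‖ ^ 2) := by
          rw [hxp_eq, sub_sub_cancel_left, norm_neg, norm_smul, Real.norm_of_nonneg hη.le]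
          ring
      _ ≤ η / 2 * ‖h‖ ^ 2 := mul_le_of_le_one_left (by positivity) hLη
  have hinner : ⟪h - v, y - xp⟫ + ⟪F' x, y - x⟫ - ⟪F' x, xp - x⟫
      = ⟪h, y - x⟫ + η * ‖h‖ ^ 2 + ⟪Δ, xp - y⟫ := by
    rw [hΔ, hxp_eq]
    simp only [inner_sub_left, inner_sub_right, inner_smul_right, real_inner_self_eq_norm_sq]
    ring
  rw [hsubgrad] at hR
  rw [hG, ge_iff_le]
  linarith

/-- the three-point inequality for the proximal step, Lemma 3 of
Xiao–Zhang. With `x⁺ = prox_{ηR}(x - η v)`, `h = (1/η)(x - x⁺)`, `Δ = v - ∇F(x)`,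
for every `y`:
`G y ≥ G x⁺ + ⟨h, y - x⟩ + (η/2)‖h‖² + (μ_F/2)‖y - x‖² + (μ_R/2)‖y - x⁺‖² + ⟨Δ, x⁺ - y⟩`. -/
theorem prox_three_point_inequality
    {E : Type*} [NormedAddCommGroup E] [InnerProductSpace ℝ E] [FiniteDimensional ℝ E]
    (L μF μR η : ℝ) (hL : 0 < L) (hμF : 0 ≤ μF) (hμR : 0 ≤ μR)
    (hη : 0 < η) (hηL : η < 1 / L)
    (F : E → ℝ) (F' : E → E) (hF : ∀ x, HasGradientAt F (F' x) x)
    (hLip : LipschitzWith (Real.toNNReal L) F')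
    (hFconv : ConvexOn ℝ Set.univ (fun y => F y - μF / 2 * ‖y‖ ^ 2))
    (R : E → ℝ)
    (hRconv : ConvexOn ℝ Set.univ (fun y => R y - μR / 2 * ‖y‖ ^ 2))
    (G : E → ℝ) (hG : G = fun y => F y + R y)
    (x v xp : E)
    (hxp : ∀ y : E, 1 / 2 * ‖xp - (x - η • v)‖ ^ 2 + η * R xp ≤
      1 / 2 * ‖y - (x - η • v)‖ ^ 2 + η * R y)
    (h Δ : E) (hh : h = (1 / η) • (x - xp)) (hΔ : Δ = v - F' x) :
    ∀ y : E,
      G y ≥ G xp + ⟪h, y - x⟫ + η / 2 * ‖h‖ ^ 2 + μF / 2 * ‖y - x‖ ^ 2 +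
        μR / 2 * ‖y - xp‖ ^ 2 + ⟪Δ, xp - y⟫ :=
  prox_three_point_inequality_general L μF μR η hη hηL F F' hF hLip hFconv R hRconv G hG x v xp hxp
    h Δ hh hΔ
end

section
/- For every z ∈ [z̄ − U/2, z̄ + U/2], the subtractively dithered quantization error has second moment Δ²/12: (1/Δ)·∫_{−Δ/2}^{Δ/2} ( z − (q(z + ν) − ν) )² dν = Δ²/12. -/
open MeasureTheory intervalIntegral

/-- The uniform quantizer with midpoint `zbar` and step size `Δ`:
`q w = z̄ + sgn(w - z̄) * Δ * ⌊|w - z̄|/Δ + 1/2⌋`. -/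
noncomputable def uniformQuantizer (zbar Δ w : ℝ) : ℝ :=
  zbar + Real.sign (w - zbar) * Δ * (⌊|w - zbar| / Δ + 1 / 2⌋ : ℤ)

lemma floor_neg_half (t : ℝ) (h : (t : ℝ) + 1/2 ≠ (⌊t + 1/2⌋ : ℤ)) :
    (⌊-t + 1/2⌋ : ℤ) = -⌊t + 1/2⌋ := by
  have h1 := Int.floor_le (t + 1/2)
  have h2 := Int.lt_floor_add_one (t + 1/2)
  rw [Int.floor_eq_iff]
  constructor
  · push_cast; linarith
  · push_cast
    have : (⌊t + 1/2⌋ : ℝ) < t + 1/2 := lt_of_le_of_ne h1 (Ne.symm h)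
    linarith

lemma key' (Δ : ℝ) (hΔ : 0 < Δ) (t : ℝ) :
    (Δ * t - Real.sign (Δ * t) * Δ * (⌊|Δ * t| / Δ + 1/2⌋ : ℤ))^2
      = Δ^2 * (t - (⌊t + 1/2⌋ : ℤ))^2 := by
  have hΔ' : Δ ≠ 0 := ne_of_gt hΔ
  rcases lt_trichotomy t 0 with hx | hx | hx
  · have hneg : Δ * t < 0 := mul_neg_of_pos_of_neg hΔ hx
    rw [Real.sign_of_neg hneg, abs_of_neg hneg]
    have hnd : -(Δ * t) / Δ = -t := by field_simp
    rw [hnd]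
    by_cases h : (t : ℝ) + 1/2 = (⌊t + 1/2⌋ : ℤ)
    · have hfl : (⌊-t + 1/2⌋ : ℤ) = 1 - ⌊t + 1/2⌋ := by
        have : -t + 1/2 = ((1 - ⌊t + 1/2⌋ : ℤ) : ℝ) := by push_cast; linarith
        rw [this, Int.floor_intCast]
      rw [hfl]
      have ht : t = (⌊t + 1/2⌋ : ℝ) - 1/2 := by linarith
      push_cast
      linear_combination (2*Δ^2) * ht
    · rw [floor_neg_half _ h]
      push_cast; ring
  · subst hx
    simp [Real.sign_zero]
    norm_num
  · have hpos : 0 < Δ * t := mul_pos hΔ hx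
    rw [Real.sign_of_pos hpos, abs_of_pos hpos]
    have hnd : Δ * t / Δ = t := by field_simp
    rw [hnd]; ring

lemma key (Δ : ℝ) (hΔ : 0 < Δ) (x : ℝ) :
    (x - Real.sign x * Δ * (⌊|x| / Δ + 1/2⌋ : ℤ))^2
      = Δ^2 * (x/Δ - (⌊x/Δ + 1/2⌋ : ℤ))^2 := by
  have hx : x = Δ * (x / Δ) := by field_simp
  calc (x - Real.sign x * Δ * (⌊|x| / Δ + 1/2⌋ : ℤ))^2
      = (Δ * (x/Δ) - Real.sign (Δ * (x/Δ)) * Δ * (⌊|Δ * (x/Δ)| / Δ + 1/2⌋ : ℤ))^2 := by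
        rw [← hx]
    _ = Δ^2 * (x/Δ - (⌊x/Δ + 1/2⌋ : ℤ))^2 := key' Δ hΔ (x/Δ)


/-- The subtractively dithered quantization error has second moment
`Δ²/12`: for `z ∈ [z̄ - U/2, z̄ + U/2]` and dither `ν` uniform on `(-Δ/2, Δ/2)`,
`(1/Δ) * ∫_{-Δ/2}^{Δ/2} (z - (q (z + ν) - ν))² dν = Δ²/12`. -/
theorem dithered_quantizer_error_second_moment
    (n : ℕ) (hn : 1 ≤ n) (U : ℝ) (hU : 0 < U) (zbar : ℝ)
    (Δ : ℝ) (hΔ : Δ = U / (2 ^ n - 1)) :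
    ∀ z ∈ Set.Icc (zbar - U / 2) (zbar + U / 2),
      (1 / Δ) * ∫ ν in (-Δ / 2)..(Δ / 2),
        (z - (uniformQuantizer zbar Δ (z + ν) - ν)) ^ 2 = Δ ^ 2 / 12 := by
  have hpow : (2:ℝ)^1 ≤ (2:ℝ)^n := pow_le_pow_right₀ (by norm_num) hn
  have hΔpos : 0 < Δ := by
    rw [hΔ]; apply div_pos hU; norm_num at hpow ⊢; linarith
  have hΔ' : Δ ≠ 0 := ne_of_gt hΔpos
  intro z hz
  -- pointwise rewrite of the integrand
  have hpt : ∀ ν : ℝ, (z - (uniformQuantizer zbar Δ (z + ν) - ν)) ^ 2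
      = Δ^2 * ((ν + (z - zbar))/Δ - (⌊(ν + (z - zbar))/Δ + 1/2⌋ : ℤ))^2 := by
    intro ν
    have h1 : z - (uniformQuantizer zbar Δ (z + ν) - ν)
        = (ν + (z - zbar)) - Real.sign (ν + (z - zbar)) * Δ
            * (⌊|ν + (z - zbar)| / Δ + 1/2⌋ : ℤ) := by
      simp only [uniformQuantizer]
      have : z + ν - zbar = ν + (z - zbar) := by ring
      rw [this]; ring
    rw [h1, key Δ hΔpos]
  have hint : (∫ ν in (-Δ / 2)..(Δ / 2),
        (z - (uniformQuantizer zbar Δ (z + ν) - ν)) ^ 2)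
      = ∫ ν in (-Δ / 2)..(Δ / 2),
        Δ^2 * (((ν + (z - zbar))/Δ - (⌊(ν + (z - zbar))/Δ + 1/2⌋ : ℤ))^2) := by
    exact intervalIntegral.integral_congr (fun ν _ => hpt ν)
  rw [hint, intervalIntegral.integral_const_mul]
  set f : ℝ → ℝ := fun ν => ((ν + (z - zbar))/Δ - (⌊(ν + (z - zbar))/Δ + 1/2⌋ : ℤ))^2 with hf
  have hper : Function.Periodic f Δ := by
    intro ν
    simp only [hf]
    have h1 : (ν + Δ + (z - zbar))/Δ = (ν + (z - zbar))/Δ + 1 := by field_simp; ring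
    rw [h1]
    have h2 : (ν + (z - zbar))/Δ + 1 + 1/2 = ((ν + (z - zbar))/Δ + 1/2) + 1 := by ring
    rw [h2, Int.floor_add_one]
    push_cast; ring
  set s : ℝ := zbar - z - Δ/2 with hs
  have hb1 : (-Δ / 2 : ℝ) + Δ = Δ / 2 := by ring
  have hshift : (∫ ν in (-Δ / 2)..(Δ / 2), f ν) = ∫ ν in s..(s + Δ), f ν := by
    rw [← hb1]
    exact hper.intervalIntegral_add_eq (-Δ/2) s
  have hae : (∫ ν in s..(s + Δ), f ν) = ∫ ν in s..(s + Δ), ((ν + (z - zbar))/Δ)^2 := by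
    apply intervalIntegral.integral_congr_ae
    have h0 : (volume : Measure ℝ) {s + Δ} = 0 := measure_singleton _
    filter_upwards [compl_mem_ae_iff.mpr h0] with ν hν hmem
    have hνne : ν ≠ s + Δ := hν
    rw [Set.uIoc_of_le (by linarith : s ≤ s + Δ)] at hmem
    have hlt : ν < s + Δ := lt_of_le_of_ne hmem.2 hνne
    have hgt : s < ν := hmem.1
    have h1 : -(1/2 : ℝ) < (ν + (z - zbar))/Δ := by
      rw [lt_div_iff₀ hΔpos]; simp only [hs] at hgt ⊢; nlinarith
    have h2 : (ν + (z - zbar))/Δ < 1/2 := by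
      rw [div_lt_iff₀ hΔpos]; simp only [hs] at hlt ⊢; nlinarith
    have hfl : (⌊(ν + (z - zbar))/Δ + 1/2⌋ : ℤ) = 0 := by
      rw [Int.floor_eq_zero_iff]
      exact ⟨by linarith, by linarith⟩
    simp only [hf, hfl, Int.cast_zero, sub_zero]
  rw [hshift, hae,
    intervalIntegral.integral_comp_add_right (fun u => (u/Δ)^2) (z - zbar)]
  have hc1 : s + (z - zbar) = -(Δ/2) := by rw [hs]; ring
  have hc2 : s + Δ + (z - zbar) = Δ/2 := by rw [hs]; ring
  rw [hc1, hc2]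
  simp only [div_pow]
  rw [intervalIntegral.integral_div, integral_pow]
  field_simp
  ring
end

section
/- For all z₁, z₂ ∈ [z̄ − U/2, z̄ + U/2], if the two quantizations use independent dithers ν₁, ν₂, each uniform on (−Δ/2, Δ/2), then the quantization errors are uncorrelated: (1/Δ²)·∫_{−Δ/2}^{Δ/2} ∫_{−Δ/2}^{Δ/2} ( z₁ − (q(z₁ + ν₁) − ν₁) )·( z₂ − (q(z₂ + ν₂) − ν₂) ) dν₁ dν₂ = 0. -/
open MeasureTheory intervalIntegral

/-! Away from the countable set of ties, the quantization error `w - q w` is the sawtooth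
`Δ * (fract ((w - z̄) / Δ + 1 / 2) - 1 / 2)`, which is `Δ`-periodic with mean zero over a period.
The dither ranges over one period, so each error integrates to zero, and the double integral of
the product factors through that integral. -/

lemma integral_fract_sub_half_eq_zero (s : ℝ) : ∫ t in s..s + 1, (Int.fract t - 1 / 2) = 0 := by
  have hper : Function.Periodic (fun t : ℝ => Int.fract t - 1 / 2) 1 := fun t => by
    simp only [Int.fract_periodic ℝ t]
  rw [hper.intervalIntegral_add_eq s 0, zero_add]
  calc ∫ t in (0 : ℝ)..1, (Int.fract t - 1 / 2) = ∫ t in (0 : ℝ)..1, (t - 1 / 2) := by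
        refine integral_congr_ae ?_
        filter_upwards [(Set.countable_singleton (1 : ℝ)).ae_notMem volume] with t ht1 ht
        rw [Set.uIoc_of_le zero_le_one] at ht
        rw [Int.fract_eq_self.mpr ⟨ht.1.le, lt_of_le_of_ne ht.2 ht1⟩]
    _ = 0 := by norm_num [integral_comp_sub_right (fun t : ℝ => t)]

lemma uniformQuantizer_eq_add_mul_floor (zbar Δ w : ℝ)
    (h : (w - zbar) / Δ + 1 / 2 ∉ Set.range ((↑) : ℤ → ℝ)) :
    uniformQuantizer zbar Δ w = zbar + Δ * ⌊(w - zbar) / Δ + 1 / 2⌋ := by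
  unfold uniformQuantizer
  rcases lt_trichotomy (w - zbar) 0 with hw | hw | hw
  · have hflip : |w - zbar| / Δ + 1 / 2 = -((w - zbar) / Δ + 1 / 2) + 1 := by
      rw [abs_of_neg hw]; ring
    rw [Real.sign_of_neg hw, hflip, Int.floor_add_one, Int.floor_neg,
      (Int.ceil_eq_floor_add_one_iff_notMem _).mpr h]
    push_cast; ring
  · norm_num [hw]
  · rw [Real.sign_of_pos hw, abs_of_pos hw]; ring

lemma sub_uniformQuantizer_eq_mul_fract (zbar : ℝ) {Δ : ℝ} (hΔ : Δ ≠ 0) (w : ℝ)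
    (h : (w - zbar) / Δ + 1 / 2 ∉ Set.range ((↑) : ℤ → ℝ)) :
    w - uniformQuantizer zbar Δ w = Δ * (Int.fract ((w - zbar) / Δ + 1 / 2) - 1 / 2) := by
  rw [uniformQuantizer_eq_add_mul_floor zbar Δ w h, Int.fract]
  field_simp; ring

lemma ae_comp_notMem_range_intCast {f : ℝ → ℝ} (hf : Function.Injective f) :
    ∀ᵐ x, f x ∉ Set.range ((↑) : ℤ → ℝ) :=
  ((Set.countable_range _).preimage hf).ae_notMem volume

theorem integral_dithered_quantization_error_eq_zero (zbar Δ z : ℝ) :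
    ∫ ν in (-Δ / 2)..(Δ / 2), (z - (uniformQuantizer zbar Δ (z + ν) - ν)) = 0 := by
  rcases eq_or_ne Δ 0 with rfl | hΔ
  · simp
  set d := (z - zbar) / Δ + 1 / 2
  have hinj : Function.Injective (fun ν : ℝ => ν / Δ + d) := fun x y hxy => by
    simpa [hΔ] using hxy
  have herr : ∀ᵐ ν, ν ∈ Set.uIoc (-Δ / 2) (Δ / 2) →
      z - (uniformQuantizer zbar Δ (z + ν) - ν) = Δ * (Int.fract (ν / Δ + d) - 1 / 2) := by
    have hd : ∀ ν : ℝ, (z + ν - zbar) / Δ + 1 / 2 = ν / Δ + d := fun ν => by ring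
    filter_upwards [ae_comp_notMem_range_intCast hinj] with ν hν _
    rw [← hd] at hν ⊢
    rw [← sub_uniformQuantizer_eq_mul_fract zbar hΔ _ hν]
    ring
  have hbounds : (Δ / 2) / Δ + d = ((-Δ / 2) / Δ + d) + 1 := by field_simp; ring
  rw [integral_congr_ae herr, intervalIntegral.integral_const_mul,
    integral_comp_div_add (fun t => Int.fract t - 1 / 2) hΔ, hbounds,
    integral_fract_sub_half_eq_zero, smul_zero, mul_zero]

theorem dithered_quantizer_errors_uncorrelated_general
    (U : ℝ) (zbar : ℝ)
    (Δ : ℝ) :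
    ∀ z₁ ∈ Set.Icc (zbar - U / 2) (zbar + U / 2),
      ∀ z₂ ∈ Set.Icc (zbar - U / 2) (zbar + U / 2),
        (1 / Δ ^ 2) * ∫ ν₁ in (-Δ / 2)..(Δ / 2), ∫ ν₂ in (-Δ / 2)..(Δ / 2),
          (z₁ - (uniformQuantizer zbar Δ (z₁ + ν₁) - ν₁)) *
            (z₂ - (uniformQuantizer zbar Δ (z₂ + ν₂) - ν₂)) = 0 := by
  intro z₁ _ z₂ _
  simp only [intervalIntegral.integral_const_mul, integral_dithered_quantization_error_eq_zero,
    mul_zero, intervalIntegral.integral_zero]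

/-- Quantization errors from independent dithers are uncorrelated:
for `z₁, z₂ ∈ [z̄ - U/2, z̄ + U/2]` and independent dithers `ν₁, ν₂`, each uniform on
`(-Δ/2, Δ/2)`,
`(1/Δ²) ∫∫ (z₁ - (q(z₁+ν₁) - ν₁)) * (z₂ - (q(z₂+ν₂) - ν₂)) dν₁ dν₂ = 0`. -/
theorem dithered_quantizer_errors_uncorrelated
    (n : ℕ) (hn : 1 ≤ n) (U : ℝ) (hU : 0 < U) (zbar : ℝ)
    (Δ : ℝ) (hΔ : Δ = U / (2 ^ n - 1)) :
    ∀ z₁ ∈ Set.Icc (zbar - U / 2) (zbar + U / 2),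
      ∀ z₂ ∈ Set.Icc (zbar - U / 2) (zbar + U / 2),
        (1 / Δ ^ 2) * ∫ ν₁ in (-Δ / 2)..(Δ / 2), ∫ ν₂ in (-Δ / 2)..(Δ / 2),
          (z₁ - (uniformQuantizer zbar Δ (z₁ + ν₁) - ν₁)) *
            (z₂ - (uniformQuantizer zbar Δ (z₂ + ν₂) - ν₂)) = 0 :=
  dithered_quantizer_errors_uncorrelated_general U zbar Δ
end
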